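/- arXiv:math/9304209 — 4 statements merged into one kernel-verified Lean document; each statement's English description precedes it below -/
import Mathlib

section
/- Let n, m ≥ 1, let E be a commutative ring, and let ρ : B_n → GL_m(E) be any group homomorphism from the braid group to the units of the matrix ring Matrix (Fin m) (Fin m) E. Set S_i := ρ(σ_i) and T_i := ρ(σ_i) − ρ(σ_i)⁻¹ (as matrices). Then: S_iS_j = S_jS_i, S_iT_j = T_jS_i, and T_iT_j = T_jT_i whenever |i−j| ≥ 2; S_iT_i = T_iS_i for every i; and S_iS_jT_i = T_jS_iS_j whenever |i−j| = 1. In other words, every finite-dimensional matrix representation of B_n extends to a representation of the singular braid monoid SB_n by sending τ_i to ρ(σ_i) − ρ(σ_i)⁻¹. -/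
/-!
Commuting units also commute with each other's inverses, which gives the far-commutation
relations and `SᵢTᵢ = TᵢSᵢ`. For the mixed relation, expand
`SᵢSⱼTᵢ = SᵢSⱼSᵢ - SᵢSⱼSᵢ⁻¹` and `TⱼSᵢSⱼ = SⱼSᵢSⱼ - Sⱼ⁻¹SᵢSⱼ`: the first terms agree by
the braid relation, and the second ones because the braid relation rearranges to
`σᵢσⱼσᵢ⁻¹ = σⱼ⁻¹σᵢσⱼ`.
-/

/-- Relators for the braid group: far commutation and the braid relations. -/
def braidRels (m : ℕ) : Set (FreeGroup (Fin m)) :=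
  {r | ∃ i j : Fin m, ((i : ℕ) + 2 ≤ (j : ℕ) ∨ (j : ℕ) + 2 ≤ (i : ℕ)) ∧
        r = FreeGroup.of i * FreeGroup.of j * (FreeGroup.of j * FreeGroup.of i)⁻¹} ∪
  {r | ∃ i j : Fin m, ((j : ℕ) = (i : ℕ) + 1 ∨ (i : ℕ) = (j : ℕ) + 1) ∧
        r = FreeGroup.of i * FreeGroup.of j * FreeGroup.of i *
            (FreeGroup.of j * FreeGroup.of i * FreeGroup.of j)⁻¹}

/-- The braid group `B_n`, presented on generators `σ_1, …, σ_{n-1}`. -/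
def BraidGroup (n : ℕ) : Type := PresentedGroup (braidRels (n - 1))

instance (n : ℕ) : Group (BraidGroup n) :=
  inferInstanceAs (Group (PresentedGroup (braidRels (n - 1))))

/-- The generator `σ_{i+1}` of the braid group `B_n`. -/
def braidGen {n : ℕ} (i : Fin (n - 1)) : BraidGroup n := PresentedGroup.of i

theorem braidGen_commute_of_far {n : ℕ} {i j : Fin (n - 1)}
    (h : (i : ℕ) + 2 ≤ (j : ℕ) ∨ (j : ℕ) + 2 ≤ (i : ℕ)) :
    Commute (braidGen (n := n) i) (braidGen j) :=
  PresentedGroup.mk_eq_mk_of_mul_inv_mem (Or.inl ⟨i, j, h, rfl⟩)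

theorem braidGen_braid_of_adjacent {n : ℕ} {i j : Fin (n - 1)}
    (h : (j : ℕ) = (i : ℕ) + 1 ∨ (i : ℕ) = (j : ℕ) + 1) :
    braidGen (n := n) i * braidGen j * braidGen i = braidGen j * braidGen i * braidGen j :=
  PresentedGroup.mk_eq_mk_of_mul_inv_mem (Or.inr ⟨i, j, h, rfl⟩)

theorem mul_mul_inv_eq_inv_mul_mul_of_braid {G : Type*} [Group G] {a b : G}
    (h : a * b * a = b * a * b) : a * b * a⁻¹ = b⁻¹ * a * b := by
  rw [mul_inv_eq_iff_eq_mul, mul_assoc, mul_assoc, eq_inv_mul_iff_mul_eq, ← mul_assoc,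
    ← mul_assoc, h]

namespace Units

variable {R : Type*} [Ring R] {u v : Rˣ}

theorem commute_val_sub_inv_right (h : Commute u v) :
    Commute (u : R) ((v : R) - ↑v⁻¹) :=
  h.units_val.sub_right h.inv_right.units_val

theorem commute_val_sub_inv (h : Commute u v) :
    Commute ((u : R) - ↑u⁻¹) ((v : R) - ↑v⁻¹) :=
  (commute_val_sub_inv_right h).sub_left (commute_val_sub_inv_right h.inv_left)

theorem commute_val_sub_inv_self (u : Rˣ) : Commute (u : R) ((u : R) - ↑u⁻¹) :=
  commute_val_sub_inv_right (Commute.refl u)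

theorem mul_mul_val_sub_inv_of_braid (h : u * v * u = v * u * v) :
    (u : R) * v * (↑u - ↑u⁻¹) = (↑v - ↑v⁻¹) * u * v := by
  rw [mul_sub, sub_mul, sub_mul]
  congr 1
  · exact_mod_cast congrArg Units.val h
  · exact_mod_cast congrArg Units.val (mul_mul_inv_eq_inv_mul_mul_of_braid h)

end Units

theorem matrix_rep_extends_to_singular_braid_monoid_general {E : Type*} [CommRing E]
    (n m : ℕ)
    (ρ : BraidGroup n →* (Matrix (Fin m) (Fin m) E)ˣ) :
    let S : Fin (n - 1) → Matrix (Fin m) (Fin m) E :=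
      fun i => (ρ (braidGen i) : Matrix (Fin m) (Fin m) E)
    let T : Fin (n - 1) → Matrix (Fin m) (Fin m) E :=
      fun i => (ρ (braidGen i) : Matrix (Fin m) (Fin m) E) -
               (((ρ (braidGen i))⁻¹ : (Matrix (Fin m) (Fin m) E)ˣ) : Matrix (Fin m) (Fin m) E)
    (∀ i j : Fin (n - 1), ((i : ℕ) + 2 ≤ (j : ℕ) ∨ (j : ℕ) + 2 ≤ (i : ℕ)) →
        S i * S j = S j * S i ∧ S i * T j = T j * S i ∧ T i * T j = T j * T i) ∧
    (∀ i : Fin (n - 1), S i * T i = T i * S i) ∧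
    (∀ i j : Fin (n - 1), ((j : ℕ) = (i : ℕ) + 1 ∨ (i : ℕ) = (j : ℕ) + 1) →
        S i * S j * T i = T j * S i * S j) := by
  intro S T
  refine ⟨fun i j h => ?_, fun i => Units.commute_val_sub_inv_self _, fun i j h => ?_⟩
  · have hij : Commute (ρ (braidGen i)) (ρ (braidGen j)) :=
      (braidGen_commute_of_far h).map ρ
    exact ⟨hij.units_val, Units.commute_val_sub_inv_right hij, Units.commute_val_sub_inv hij⟩
  · exact Units.mul_mul_val_sub_inv_of_braid
      (by simp only [← map_mul, braidGen_braid_of_adjacent h])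

/-- Every finite-dimensional matrix representation of the braid group extends
to the singular braid monoid by `τ_i ↦ ρ(σ_i) − ρ(σ_i)⁻¹`: the matrices
`S i := ρ(σ_i)` and `T i := ρ(σ_i) − ρ(σ_i)⁻¹` satisfy the defining relations
of the singular braid monoid. -/
theorem matrix_rep_extends_to_singular_braid_monoid {E : Type*} [CommRing E]
    (n m : ℕ) (hn : 1 ≤ n) (hm : 1 ≤ m)
    (ρ : BraidGroup n →* (Matrix (Fin m) (Fin m) E)ˣ) :
    let S : Fin (n - 1) → Matrix (Fin m) (Fin m) E :=
      fun i => (ρ (braidGen i) : Matrix (Fin m) (Fin m) E)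
    let T : Fin (n - 1) → Matrix (Fin m) (Fin m) E :=
      fun i => (ρ (braidGen i) : Matrix (Fin m) (Fin m) E) -
               (((ρ (braidGen i))⁻¹ : (Matrix (Fin m) (Fin m) E)ˣ) : Matrix (Fin m) (Fin m) E)
    (∀ i j : Fin (n - 1), ((i : ℕ) + 2 ≤ (j : ℕ) ∨ (j : ℕ) + 2 ≤ (i : ℕ)) →
        S i * S j = S j * S i ∧ S i * T j = T j * S i ∧ T i * T j = T j * T i) ∧
    (∀ i : Fin (n - 1), S i * T i = T i * S i) ∧
    (∀ i j : Fin (n - 1), ((j : ℕ) = (i : ℕ) + 1 ∨ (i : ℕ) = (j : ℕ) + 1) →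
        S i * S j * T i = T j * S i * S j) :=
  matrix_rep_extends_to_singular_braid_monoid_general n m ρ
end

section
/- Let R be an E-matrix indexed by (Fin m × Fin m) × (Fin m × Fin m) and let μ : Fin m → E satisfy the enhancement condition (8a): μ(i₁)·μ(i₂)·R((i₁,i₂),(j₁,j₂)) = R((i₁,i₂),(j₁,j₂))·μ(j₁)·μ(j₂) for all i₁, i₂, j₁, j₂ (i.e. μ⊗μ commutes with R). Then for every n ≥ 2 and every i with i+1 < n, the diagonal matrix D^n(μ) commutes with A_i^n(R); consequently, if ρ : B_n → GL of the matrix ring indexed by (Fin n → Fin m) is a group homomorphism with ρ(σ_i) = A_{i−1}^n(R) for all i, then D^n(μ) commutes with ρ(β) for every β ∈ B_n, and trace(ρ(αβ)·D^n(μ)) = trace(ρ(βα)·D^n(μ)) for all α, β ∈ B_n (invariance of the enhanced trace under conjugation, Markov's first move). -/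
/-- The matrix of `id^{⊗ i} ⊗ R ⊗ id^{⊗ (n-i-2)}` acting on the `n`-th tensor
power of the free module `E^m`. -/
def Amat {E : Type*} [CommRing E] (m n : ℕ)
    (R : Matrix (Fin m × Fin m) (Fin m × Fin m) E) (i : ℕ) (hi : i + 1 < n) :
    Matrix (Fin n → Fin m) (Fin n → Fin m) E :=
  fun f g =>
    R (f ⟨i, Nat.lt_of_succ_lt hi⟩, f ⟨i + 1, hi⟩)
      (g ⟨i, Nat.lt_of_succ_lt hi⟩, g ⟨i + 1, hi⟩) *
    ∏ k ∈ Finset.univ.filter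
        (fun k : Fin n => k ≠ ⟨i, Nat.lt_of_succ_lt hi⟩ ∧ k ≠ ⟨i + 1, hi⟩),
      (if f k = g k then 1 else 0)

/-- The `n`-th Kronecker power of the diagonal matrix with entries `μ`. -/
def Dmat {E : Type*} [CommRing E] (m n : ℕ) (μ : Fin m → E) :
    Matrix (Fin n → Fin m) (Fin n → Fin m) E :=
  Matrix.diagonal fun f => ∏ k, μ (f k)


theorem Finset.prod_univ_eq_mul_mul_prod_filter_ne {ι M : Type*} [Fintype ι] [DecidableEq ι]
    [CommMonoid M] (x : ι → M) {a b : ι} (hab : a ≠ b) :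
    ∏ k, x k = x a * x b * ∏ k ∈ Finset.univ.filter (fun k => k ≠ a ∧ k ≠ b), x k := by
  have hfilter : Finset.univ.filter (fun k => k ≠ a ∧ k ≠ b) = (Finset.univ.erase a).erase b := by
    ext k
    simp [and_comm]
  rw [hfilter, mul_assoc, Finset.mul_prod_erase _ _ (by simpa using hab.symm),
    Finset.mul_prod_erase _ _ (Finset.mem_univ a)]

theorem Matrix.diagonal_mul_eq_mul_diagonal {ι R : Type*} [Fintype ι] [DecidableEq ι]
    [NonUnitalNonAssocSemiring R] {d : ι → R} {M : Matrix ι ι R}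
    (h : ∀ i j, d i * M i j = M i j * d j) :
    Matrix.diagonal d * M = M * Matrix.diagonal d := by
  ext i j
  rw [Matrix.diagonal_mul, Matrix.mul_diagonal, h]

theorem Matrix.trace_mul_mul_of_commute {ι R : Type*} [Fintype ι] [CommSemiring R]
    {A B D : Matrix ι ι R} (h : Commute D A) :
    Matrix.trace (A * B * D) = Matrix.trace (B * A * D) := by
  rw [mul_assoc, Matrix.trace_mul_comm, mul_assoc, h.eq, mul_assoc]

theorem MonoidHom.commute_apply_of_closure_eq_top {G M : Type*} [Group G] [Monoid M]
    (ρ : G →* Mˣ) {S : Set G} (hS : Subgroup.closure S = ⊤) {x : M}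
    (hx : ∀ s ∈ S, Commute x (ρ s)) (g : G) : Commute x (ρ g) := by
  induction (hS ▸ Subgroup.mem_top g : g ∈ Subgroup.closure S) using
    Subgroup.closure_induction with
  | mem s hs => exact hx s hs
  | one => simp
  | mul g h _ _ hg hh => simpa using hg.mul_right hh
  | inv g _ hg => simpa using hg.units_inv_right

theorem commute_Dmat_Amat {E : Type*} [CommRing E] (m n : ℕ)
    (R : Matrix (Fin m × Fin m) (Fin m × Fin m) E) (μ : Fin m → E)
    (hμR : ∀ i₁ i₂ j₁ j₂ : Fin m,
      μ i₁ * μ i₂ * R (i₁, i₂) (j₁, j₂) = R (i₁, i₂) (j₁, j₂) * μ j₁ * μ j₂)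
    (i : ℕ) (hi : i + 1 < n) :
    Commute (Dmat m n μ) (Amat m n R i hi) := by
  set a : Fin n := ⟨i, Nat.lt_of_succ_lt hi⟩
  set b : Fin n := ⟨i + 1, hi⟩
  have hab : a ≠ b := by simp [a, b, Fin.ext_iff]
  refine Matrix.diagonal_mul_eq_mul_diagonal fun f g => ?_
  simp only [Amat, Finset.prod_boole, Finset.prod_univ_eq_mul_mul_prod_filter_ne _ hab]
  split_ifs with hfg
  · rw [Finset.prod_congr rfl fun k hk => congrArg μ (hfg k hk)]
    linear_combination (∏ k ∈ Finset.univ.filter (fun k => k ≠ a ∧ k ≠ b), μ (g k)) *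
      hμR (f a) (f b) (g a) (g b)
  · simp

/-- If `μ ⊗ μ` commutes with `R` (enhancement condition (8a)), then `D^n(μ)`
commutes with each `A_i^n(R)`; consequently it commutes with the image of any
R-matrix representation of the braid group, and the enhanced trace
`β ↦ trace(ρ(β)·D^n(μ))` is invariant under conjugation. -/
theorem enhanced_trace_conjugation_invariant {E : Type*} [CommRing E]
    (m : ℕ)
    (R : Matrix (Fin m × Fin m) (Fin m × Fin m) E) (μ : Fin m → E)
    (h8a : ∀ i₁ i₂ j₁ j₂ : Fin m,
      μ i₁ * μ i₂ * R (i₁, i₂) (j₁, j₂) = R (i₁, i₂) (j₁, j₂) * μ j₁ * μ j₂) :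
    (∀ n : ℕ, 2 ≤ n → ∀ i : ℕ, ∀ hi : i + 1 < n,
        Dmat m n μ * Amat m n R i hi = Amat m n R i hi * Dmat m n μ) ∧
    (∀ n : ℕ, 2 ≤ n →
      ∀ ρ : BraidGroup n →* (Matrix (Fin n → Fin m) (Fin n → Fin m) E)ˣ,
        (∀ i : Fin (n - 1),
            ((ρ (braidGen i) : (Matrix (Fin n → Fin m) (Fin n → Fin m) E)ˣ) :
                Matrix (Fin n → Fin m) (Fin n → Fin m) E) =
              Amat m n R (i : ℕ) (by have := i.isLt; omega)) →
        (∀ β : BraidGroup n,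
            Dmat m n μ * (ρ β : Matrix (Fin n → Fin m) (Fin n → Fin m) E) =
            (ρ β : Matrix (Fin n → Fin m) (Fin n → Fin m) E) * Dmat m n μ) ∧
        (∀ α β : BraidGroup n,
            Matrix.trace ((ρ (α * β) : Matrix (Fin n → Fin m) (Fin n → Fin m) E) * Dmat m n μ) =
            Matrix.trace ((ρ (β * α) : Matrix (Fin n → Fin m) (Fin n → Fin m) E) * Dmat m n μ))) := by
  refine ⟨fun n _ i hi => (commute_Dmat_Amat m n R μ h8a i hi).eq, fun n _ ρ hρ => ?_⟩
  have hcomm (β : BraidGroup n) : Commute (Dmat m n μ) (ρ β) := by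
    refine ρ.commute_apply_of_closure_eq_top (PresentedGroup.closure_range_of _) ?_ β
    rintro _ ⟨i, rfl⟩
    exact (hρ i).symm ▸ commute_Dmat_Amat m n R μ h8a i _
  refine ⟨fun β => (hcomm β).eq, fun α β => ?_⟩
  simp only [map_mul, Units.val_mul]
  exact Matrix.trace_mul_mul_of_commute (hcomm α)
end

section
/- Let R be an invertible E-matrix indexed by (Fin m × Fin m) × (Fin m × Fin m) and let μ : Fin m → E satisfy the enhancement condition (8b): for all i, k ∈ Fin m, ∑_{j} R((i,j),(k,j))·μ(j) = (if i = k then 1 else 0), and likewise ∑_{j} R⁻¹((i,j),(k,j))·μ(j) = (if i = k then 1 else 0). Then for every n ≥ 1 and every E-matrix M indexed by functions Fin n → Fin m, and for each choice of sign ±: trace( ext(M) · A_{n−1}^{n+1}(R^{±1}) · D^{n+1}(μ) ) = trace( M · D^{n}(μ) ). (This is the trace identity ensuring invariance of the enhanced trace under Markov's second move, stabilization by σ_n^{±1}.) -/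
/-- `M ⊗ id` on the last tensor factor. -/
def extM {E : Type*} [CommRing E] {m n : ℕ}
    (M : Matrix (Fin n → Fin m) (Fin n → Fin m) E) :
    Matrix (Fin (n + 1) → Fin m) (Fin (n + 1) → Fin m) E :=
  fun f g => M (fun k => f k.castSucc) (fun k => g k.castSucc) *
    (if f (Fin.last n) = g (Fin.last n) then 1 else 0)

lemma key {E : Type*} [CommRing E] {m n : ℕ} (hn : 1 ≤ n)
    (S : Matrix (Fin m × Fin m) (Fin m × Fin m) E) (μ : Fin m → E)
    (h : ∀ i k : Fin m, (∑ j : Fin m, S (i, j) (k, j) * μ j) = if i = k then 1 else 0)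
    (M : Matrix (Fin n → Fin m) (Fin n → Fin m) E) (hlt : n - 1 + 1 < n + 1) :
    Matrix.trace (extM M * Amat m (n + 1) S (n - 1) hlt * Dmat m (n + 1) μ) =
      Matrix.trace (M * Dmat m n μ) := by
  have hq : n - 1 < n := by omega
  set q : Fin n := ⟨n - 1, hq⟩ with hqdef
  have hcast : (⟨n - 1, Nat.lt_of_succ_lt hlt⟩ : Fin (n + 1)) = q.castSucc := rfl
  have hlast : (⟨n - 1 + 1, hlt⟩ : Fin (n + 1)) = Fin.last n := by
    ext; simp; omega
  set e : Fin m × (Fin n → Fin m) ≃ (Fin (n + 1) → Fin m) :=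
    Fin.snocEquiv (fun _ => Fin m) with hedef
  have he : ∀ p : Fin m × (Fin n → Fin m), e p = Fin.snoc p.2 p.1 := fun p => rfl
  have Pprod : ∀ (f g : Fin n → Fin m) (a b : Fin m),
      (∏ k ∈ Finset.univ.filter
          (fun k : Fin (n+1) => k ≠ ⟨n - 1, Nat.lt_of_succ_lt hlt⟩ ∧ k ≠ ⟨n - 1 + 1, hlt⟩),
        (if (Fin.snoc f a : Fin (n+1) → Fin m) k = (Fin.snoc g b : Fin (n+1) → Fin m) k then (1:E) else 0)) =
      ∏ k ∈ Finset.univ.filter (fun k : Fin n => k ≠ q),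
        (if f k = g k then (1:E) else 0) := by
    intro f g a b
    rw [Finset.prod_filter, Finset.prod_filter, Fin.prod_univ_castSucc]
    simp [hcast, hlast, Fin.snoc_castSucc, Fin.snoc_last,
      (Fin.castSucc_lt_last _).ne, Fin.castSucc_inj]
  have step1 : Matrix.trace (extM M * Amat m (n + 1) S (n - 1) hlt * Dmat m (n + 1) μ)
      = ∑ f, (∑ g, extM M f g * Amat m (n + 1) S (n - 1) hlt g f) * ∏ k, μ (f k) := by
    simp only [Dmat, Matrix.trace, Matrix.diag, Matrix.mul_diagonal]
    simp only [Matrix.mul_apply]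
  rw [step1,
    ← Equiv.sum_comp e (fun f => (∑ g, extM M f g * Amat m (n + 1) S (n - 1) hlt g f) * ∏ k, μ (f k))]
  have step2 : ∀ p : Fin m × (Fin n → Fin m),
      (∑ g, extM M (e p) g * Amat m (n + 1) S (n - 1) hlt g (e p)) * ∏ k, μ (e p k)
      = (∑ r : Fin m × (Fin n → Fin m),
          (M p.2 r.2 * (if p.1 = r.1 then 1 else 0)) *
            (S (r.2 q, r.1) (p.2 q, p.1) *
              ∏ k ∈ Finset.univ.filter (fun k : Fin n => k ≠ q), (if r.2 k = p.2 k then (1:E) else 0))) *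
        ((∏ k, μ (p.2 k)) * μ p.1) := by
    intro p
    rw [← Equiv.sum_comp e (fun g => extM M (e p) g * Amat m (n + 1) S (n - 1) hlt g (e p))]
    congr 1
    · refine Finset.sum_congr rfl fun r _ => ?_
      simp only [he, extM, Amat, Pprod]
      simp only [hcast, hlast, Fin.snoc_castSucc, Fin.snoc_last]
    · rw [Fin.prod_univ_castSucc]
      simp [he]
  refine Eq.trans (Finset.sum_congr rfl fun p _ => step2 p) ?_
  rw [Fintype.sum_prod_type, Finset.sum_comm]
  have rhs : Matrix.trace (M * Dmat m n μ) = ∑ f', M f' f' * ∏ k, μ (f' k) := by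
    simp only [Dmat, Matrix.trace, Matrix.diag, Matrix.mul_diagonal]
  rw [rhs]
  refine Finset.sum_congr rfl fun f _ => ?_
  have inner1 : ∀ j : Fin m,
      (∑ r : Fin m × (Fin n → Fin m),
          (M f r.2 * if j = r.1 then 1 else 0) *
            (S (r.2 q, r.1) (f q, j) *
              ∏ k ∈ Finset.filter (fun k => k ≠ q) Finset.univ,
                if r.2 k = f k then (1:E) else 0)) =
      ∑ g : Fin n → Fin m,
          M f g * (S (g q, j) (f q, j) *
            ∏ k ∈ Finset.filter (fun k => k ≠ q) Finset.univ,
              if g k = f k then (1:E) else 0) := by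
    intro j
    rw [Fintype.sum_prod_type, Finset.sum_comm]
    refine Finset.sum_congr rfl fun g _ => ?_
    simp only [mul_ite, mul_one, mul_zero, ite_mul, zero_mul]
    rw [Finset.sum_ite_eq]
    simp
  simp only [inner1]
  simp only [Finset.sum_mul]
  rw [Finset.sum_comm]
  have del : ∀ g : Fin n → Fin m,
      (∏ k ∈ Finset.filter (fun k => k ≠ q) Finset.univ,
        if g k = f k then (1:E) else 0) * (if g q = f q then (1:E) else 0) =
      if g = f then 1 else 0 := by
    intro g
    have h1 : Finset.univ.filter (fun k : Fin n => ¬ k ≠ q) = {q} := by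
      ext k; simp
    calc (∏ k ∈ Finset.filter (fun k => k ≠ q) Finset.univ,
        if g k = f k then (1:E) else 0) * (if g q = f q then (1:E) else 0)
        = ∏ k : Fin n, (if g k = f k then (1:E) else 0) := by
          rw [← Finset.prod_filter_mul_prod_filter_not Finset.univ (fun k => k ≠ q)]
          congr 1
          rw [h1, Finset.prod_singleton]
      _ = if g = f then 1 else 0 := by
          rw [Fintype.prod_boole]
          simp [funext_iff]
  have inner2 : ∀ g : Fin n → Fin m,
      (∑ j : Fin m, (M f g * (S (g q, j) (f q, j) *
          ∏ k ∈ Finset.filter (fun k => k ≠ q) Finset.univ,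
            if g k = f k then (1:E) else 0)) * ((∏ k, μ (f k)) * μ j)) =
      M f g * (if g = f then 1 else 0) * ∏ k, μ (f k) := by
    intro g
    have : M f g * (if g = f then 1 else 0) * ∏ k, μ (f k)
        = (M f g * ((∏ k ∈ Finset.filter (fun k => k ≠ q) Finset.univ,
            if g k = f k then (1:E) else 0) * ∏ k, μ (f k))) *
          ∑ j : Fin m, S (g q, j) (f q, j) * μ j := by
      rw [h (g q) (f q), ← del g]; ring
    rw [this, Finset.mul_sum]
    exact Finset.sum_congr rfl fun j _ => by ring
  refine Eq.trans (Finset.sum_congr rfl fun g _ => inner2 g) ?_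
  simp only [mul_ite, mul_one, mul_zero, ite_mul, zero_mul]
  rw [Finset.sum_ite_eq' Finset.univ f]
  simp

/-- Invariance of the enhanced trace under Markov's second move (stabilization
by `σ_n^{±1}`): under the enhancement condition (8b) for `R` and `R⁻¹`,
`trace(ext(M)·A_{n-1}^{n+1}(R^{±1})·D^{n+1}(μ)) = trace(M·D^n(μ))`. -/
theorem enhanced_trace_markov_stabilization {E : Type*} [CommRing E]
    (m : ℕ) (hm : 1 ≤ m)
    (R : Matrix (Fin m × Fin m) (Fin m × Fin m) E) (hR : IsUnit R)
    (μ : Fin m → E)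
    (h8b : ∀ i k : Fin m,
      (∑ j : Fin m, R (i, j) (k, j) * μ j) = if i = k then 1 else 0)
    (h8b' : ∀ i k : Fin m,
      (∑ j : Fin m, R⁻¹ (i, j) (k, j) * μ j) = if i = k then 1 else 0)
    (n : ℕ) (hn : 1 ≤ n)
    (M : Matrix (Fin n → Fin m) (Fin n → Fin m) E) :
    Matrix.trace (extM M * Amat m (n + 1) R (n - 1) (by omega) * Dmat m (n + 1) μ) =
      Matrix.trace (M * Dmat m n μ) ∧
    Matrix.trace (extM M * Amat m (n + 1) R⁻¹ (n - 1) (by omega) * Dmat m (n + 1) μ) =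
      Matrix.trace (M * Dmat m n μ) := by
  exact ⟨key hn R μ h8b M (by omega), key hn R⁻¹ μ h8b' M (by omega)⟩
end

section
/- Let E be a commutative ring, q ∈ E invertible, let A be an associative unital E-algebra, and let e_1, …, e_{n−1} ∈ A satisfy: e_i² = e_i for all i; e_i e_j = e_j e_i whenever |i−j| ≥ 2; and (1+q)² · e_i e_j e_i = q · e_i whenever |i−j| = 1. Set g_i := (1+q)·e_i − 1. Then: (a) g_i² = (q−1)·g_i + q·1 for every i; (b) each g_i is invertible, with g_i⁻¹ = q⁻¹·(g_i − (q−1)·1); (c) the g_i satisfy the braid relations g_i g_j = g_j g_i for |i−j| ≥ 2 and g_i g_j g_i = g_j g_i g_j for |i−j| = 1. Consequently there is a (unique) group homomorphism from the braid group B_n to the group of units Aˣ sending σ_i to g_i for every i. -/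
/-- Jones's construction: if `e_1, …, e_{n-1}` are idempotents in an
`E`-algebra satisfying far commutation and the relation
`(1+q)² e_i e_j e_i = q e_i` for `|i−j| = 1`, then `g_i := (1+q)·e_i − 1`
satisfies `g_i² = (q−1)·g_i + q·1`, each `g_i` is invertible with inverse
`q⁻¹·(g_i − (q−1)·1)`, the `g_i` satisfy the braid relations, and hence there
is a unique group homomorphism `B_n → Aˣ` with `σ_i ↦ g_i`. -/
theorem jones_tower_braid_representation {E : Type*} [CommRing E] (q : Eˣ)
    {A : Type*} [Ring A] [Algebra E A] (n : ℕ) (hn : 1 ≤ n)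
    (e : Fin (n - 1) → A)
    (hidem : ∀ i, e i * e i = e i)
    (hfar : ∀ i j : Fin (n - 1), ((i : ℕ) + 2 ≤ (j : ℕ) ∨ (j : ℕ) + 2 ≤ (i : ℕ)) →
      e i * e j = e j * e i)
    (hadj : ∀ i j : Fin (n - 1), ((j : ℕ) = (i : ℕ) + 1 ∨ (i : ℕ) = (j : ℕ) + 1) →
      ((1 + (q : E)) ^ 2) • (e i * e j * e i) = (q : E) • e i) :
    let g : Fin (n - 1) → A := fun i => (1 + (q : E)) • e i - 1
    (∀ i, g i * g i = ((q : E) - 1) • g i + (q : E) • (1 : A)) ∧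
    (∀ i, g i * (((q⁻¹ : Eˣ) : E) • (g i - ((q : E) - 1) • (1 : A))) = 1 ∧
          (((q⁻¹ : Eˣ) : E) • (g i - ((q : E) - 1) • (1 : A))) * g i = 1) ∧
    (∀ i j : Fin (n - 1), ((i : ℕ) + 2 ≤ (j : ℕ) ∨ (j : ℕ) + 2 ≤ (i : ℕ)) →
      g i * g j = g j * g i) ∧
    (∀ i j : Fin (n - 1), ((j : ℕ) = (i : ℕ) + 1 ∨ (i : ℕ) = (j : ℕ) + 1) →
      g i * g j * g i = g j * g i * g j) ∧
    (∃! φ : BraidGroup n →* Aˣ, ∀ i, ((φ (braidGen i) : Aˣ) : A) = g i) := by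
  intro g
  have hg : ∀ i, g i = (1 + (q : E)) • e i - 1 := fun _ => rfl
  -- (a) quadratic relation
  have hsq : ∀ i, g i * g i = ((q : E) - 1) • g i + (q : E) • (1 : A) := by
    intro i
    rw [hg i]
    rw [sub_mul, mul_sub, smul_mul_assoc, mul_smul_comm, smul_smul, hidem i,
      one_mul, mul_one]
    module
  -- (b) invertibility
  have hinv1 : ∀ i, g i * (((q⁻¹ : Eˣ) : E) • (g i - ((q : E) - 1) • (1 : A))) = 1 := by
    intro i
    rw [mul_smul_comm, mul_sub, hsq i, mul_smul_comm, mul_one, add_sub_cancel_left,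
      smul_smul, Units.inv_mul, one_smul]
  have hinv2 : ∀ i, (((q⁻¹ : Eˣ) : E) • (g i - ((q : E) - 1) • (1 : A))) * g i = 1 := by
    intro i
    rw [smul_mul_assoc, sub_mul, hsq i, smul_mul_assoc, one_mul, add_sub_cancel_left,
      smul_smul, Units.inv_mul, one_smul]
  -- (c) far commutation
  have hfarg : ∀ i j : Fin (n - 1), ((i : ℕ) + 2 ≤ (j : ℕ) ∨ (j : ℕ) + 2 ≤ (i : ℕ)) →
      g i * g j = g j * g i := by
    intro i j hij
    rw [hg i, hg j]
    simp only [sub_mul, mul_sub, smul_mul_assoc, mul_smul_comm, one_mul, mul_one,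
      hfar i j hij]
    module
  -- (d) braid relation
  have hadjg : ∀ i j : Fin (n - 1), ((j : ℕ) = (i : ℕ) + 1 ∨ (i : ℕ) = (j : ℕ) + 1) →
      g i * g j * g i = g j * g i * g j := by
    intro i j hij
    have h1 : ((1 + (q : E)) * ((1 + (q : E)) * (1 + (q : E)))) • (e i * e j * e i)
        = ((1 + (q : E)) * (q : E)) • e i := by
      rw [show (1 + (q : E)) * ((1 + (q : E)) * (1 + (q : E)))
          = (1 + (q : E)) * ((1 + (q : E)) ^ 2) by ring,
        ← smul_smul, hadj i j hij, smul_smul]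
    have h2 : ((1 + (q : E)) * ((1 + (q : E)) * (1 + (q : E)))) • (e j * e i * e j)
        = ((1 + (q : E)) * (q : E)) • e j := by
      rw [show (1 + (q : E)) * ((1 + (q : E)) * (1 + (q : E)))
          = (1 + (q : E)) * ((1 + (q : E)) ^ 2) by ring,
        ← smul_smul, hadj j i hij.symm, smul_smul]
    rw [hg i, hg j]
    simp only [sub_mul, mul_sub, smul_mul_assoc, mul_smul_comm, smul_sub, smul_smul,
      hidem i, hidem j, one_mul, mul_one]
    rw [h1, h2]
    module
  refine ⟨hsq, fun i => ⟨hinv1 i, hinv2 i⟩, hfarg, hadjg, ?_⟩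
  -- the representation
  let u : Fin (n - 1) → Aˣ := fun i => ⟨g i, ((q⁻¹ : Eˣ) : E) • (g i - ((q : E) - 1) • (1 : A)),
    hinv1 i, hinv2 i⟩
  have hrels : ∀ r ∈ braidRels (n - 1), FreeGroup.lift u r = 1 := by
    rintro r (⟨i, j, hij, rfl⟩ | ⟨i, j, hij, rfl⟩) <;>
      · simp only [map_mul, map_inv, FreeGroup.lift_apply_of, mul_inv_eq_one]
        exact Units.ext (by simpa using (by first | exact hfarg i j hij | exact hadjg i j hij))
  refine ⟨PresentedGroup.toGroup hrels, fun i => ?_, fun ψ hψ => ?_⟩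
  · show ((PresentedGroup.toGroup hrels (PresentedGroup.of i) : Aˣ) : A) = g i
    rw [PresentedGroup.toGroup.of]
  · refine PresentedGroup.ext fun i => ?_
    rw [PresentedGroup.toGroup.of]
    exact Units.ext (hψ i)
end
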